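/- Camembert lemma: Let L be an ℳ-complex and w a 0-cell of L. Then the set L_w = {u ∈ L₂ ∣ w is a vertex of u} can be arranged in a cyclic order u₁, ..., uₙ such that consecutive 2-cells (indices mod n) are w-neighbours, i.e. share an edge having w as a vertex. -/

import Mathlib

open scoped Classical

/-- `e` is an edge of the 2-cell `u`. -/
def edgeOf {K2 K1 : Type*} (d2 : Fin 3 → K2 → K1) (e : K1) (u : K2) : Prop :=
  ∃ i, d2 i u = e

/-- `w` is a vertex of the 2-cell `u` (a face of a face of `u`). -/
def vertexOf {K2 K1 K0 : Type*} (d2 : Fin 3 → K2 → K1) (d1 : Fin 2 → K1 → K0)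
    (w : K0) (u : K2) : Prop :=
  ∃ i j, d1 j (d2 i u) = w

/-- Two 2-cells are `w`-neighbours when they share an edge having `w` as a vertex. -/
def wNbr {K2 K1 K0 : Type*} (d2 : Fin 3 → K2 → K1) (d1 : Fin 2 → K1 → K0)
    (w : K0) (u u' : K2) : Prop :=
  ∃ e : K1, edgeOf d2 e u ∧ edgeOf d2 e u' ∧ ∃ j, d1 j e = w

/-- The (signed) incidence coefficient of the 1-cell `e` in the boundary of the
2-cell `u`: the coefficient of `e` in `d₀u - d₁u + d₂u`. -/
noncomputable def incCoef {K2 K1 : Type*} (d2 : Fin 3 → K2 → K1) (u : K2) (e : K1) : ℤ :=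
  ∑ i : Fin 3, if d2 i u = e then (if i = 1 then -1 else 1) else 0

/-- The boundary `∂₂` of a 2-chain, as a coefficient function on 1-cells. -/
noncomputable def bdry2 {K2 K1 : Type*} (d2 : Fin 3 → K2 → K1) (c : K2 →₀ ℤ) : K1 → ℤ :=
  fun e => c.sum fun u n => n * incCoef d2 u e

/-- An `ℳ`-complex: a connected Δ-complex which is (0) finite, (1) homogeneous
2-dimensional, (2) regular, (3) with every 1-cell an edge of exactly two 2-cells,
(4) with linked links of 0-cells, and (5) orientable (its group of 2-cycles is
infinite cyclic). -/
structure MComplex (K2 K1 K0 : Type*) : Type _ where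
  d2 : Fin 3 → K2 → K1
  d1 : Fin 2 → K1 → K0
  finite2 : Finite K2
  finite1 : Finite K1
  finite0 : Finite K0
  simp01 : ∀ u, d1 0 (d2 1 u) = d1 0 (d2 0 u)
  simp02 : ∀ u, d1 0 (d2 2 u) = d1 1 (d2 0 u)
  simp12 : ∀ u, d1 1 (d2 2 u) = d1 1 (d2 1 u)
  homog1 : ∀ e : K1, ∃ u : K2, edgeOf d2 e u
  homog0 : ∀ w : K0, ∃ (e : K1) (j : Fin 2), d1 j e = w
  regular2 : ∀ u : K2, Function.Injective fun i => d2 i u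
  regular1 : ∀ e : K1, d1 0 e ≠ d1 1 e
  edge_two : ∀ e : K1, ∃ u v : K2, u ≠ v ∧ edgeOf d2 e u ∧ edgeOf d2 e v ∧
      ∀ x : K2, edgeOf d2 e x → x = u ∨ x = v
  linked : ∀ (w : K0) (u u' : K2), vertexOf d2 d1 w u → vertexOf d2 d1 w u' →
      Relation.ReflTransGen (wNbr d2 d1 w) u u'
  connected : ∀ w w' : K0, Relation.ReflTransGen
      (fun a b => ∃ e : K1, (d1 0 e = a ∧ d1 1 e = b) ∨ (d1 0 e = b ∧ d1 1 e = a)) w w'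
  orientable : ∃ c : K2 →₀ ℤ, c ≠ 0 ∧ bdry2 d2 c = 0 ∧
      ∀ c' : K2 →₀ ℤ, bdry2 d2 c' = 0 → ∃ k : ℤ, c' = k • c

/-!
A `w`-flag is a 2-cell `u` through `w` together with one of the edges of `u` through `w`.
Every such cell has exactly two edges through `w` and every edge lies in exactly two cells, so
`turn` (change the edge, keep the cell) and `cross` (change the cell, keep the edge) are
fixed-point-free involutions of the finite set of flags, and `rotate = turn ∘ cross` is a
permutation. Along an orbit of `rotate` consecutive cells share the edge just crossed. Two flags
of one orbit never lie on the same cell: that would make `rotate^[d] q = turn q`, impossible by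
a parity argument in the dihedral group generated by `turn` and `cross`. Finally the cells of an
orbit are closed under `w`-neighbours, so by linkedness they exhaust `L_w`.
-/

open Function

namespace Set

variable {α : Type*} {s : Set α} {a b : α}

noncomputable def partner (s : Set α) (a : α) : α :=
  if h : ∃ b ∈ s, b ≠ a then h.choose else a

theorem partner_mem_and_ne (hs : s.ncard = 2) (ha : a ∈ s) :
    s.partner a ∈ s ∧ s.partner a ≠ a := by
  obtain ⟨x, y, hxy, rfl⟩ := ncard_eq_two.mp hs
  have h : ∃ b ∈ ({x, y} : Set α), b ≠ a := by
    rcases ha with rfl | rfl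
    · exact ⟨y, by simp, hxy.symm⟩
    · exact ⟨x, by simp, hxy⟩
  rw [partner, dif_pos h]
  exact h.choose_spec

theorem partner_mem (hs : s.ncard = 2) (ha : a ∈ s) : s.partner a ∈ s :=
  (partner_mem_and_ne hs ha).1

theorem partner_ne (hs : s.ncard = 2) (ha : a ∈ s) : s.partner a ≠ a :=
  (partner_mem_and_ne hs ha).2

theorem partner_eq_of_mem_of_ne (hs : s.ncard = 2) (ha : a ∈ s) (hb : b ∈ s) (hba : b ≠ a) :
    s.partner a = b := by
  have hp := partner_mem hs ha
  have hpa := partner_ne hs ha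
  obtain ⟨x, y, -, rfl⟩ := ncard_eq_two.mp hs
  simp only [mem_insert_iff, mem_singleton_iff] at ha hb hp
  grind

theorem partner_partner (hs : s.ncard = 2) (ha : a ∈ s) : s.partner (s.partner a) = a :=
  partner_eq_of_mem_of_ne hs (partner_mem hs ha) ha (partner_ne hs ha).symm

end Set

namespace Function.Involutive

variable {α : Type*} {f g : α → α}

theorem iterate_comp_apply_ne (hf : Involutive f) (hg : Involutive g)
    (hf' : ∀ x, f x ≠ x) (hg' : ∀ x, g x ≠ x) (n : ℕ) (x : α) : (f ∘ g)^[n] x ≠ f x := by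
  induction n using Nat.twoStepInduction generalizing x with
  | zero => exact (hf' x).symm
  | one => exact fun h => hg' x (hf.injective h)
  | more n ih _ =>
    intro h
    -- `(f ∘ g) ∘ f ∘ (f ∘ g) = f`, so one step can be cancelled on each side
    have hfg : (f ∘ g) (f ((f ∘ g) x)) = f x := by
      simp only [comp_apply, hf (g x), hg x]
    refine ih ((f ∘ g) x) ((hf.injective.comp hg.injective) ?_)
    rw [← iterate_succ_apply' (f ∘ g), ← iterate_succ_apply, hfg]
    exact h
end Function.Involutive

namespace MComplex

variable {K2 K1 K0 : Type*} (M : MComplex K2 K1 K0)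

/-- The vertices of `u`, numbered so that `M.d2 i u` is the edge opposite to the `i`-th one. -/
def vtx (u : K2) : Fin 3 → K0 :=
  ![M.d1 1 (M.d2 1 u), M.d1 1 (M.d2 0 u), M.d1 0 (M.d2 0 u)]

theorem exists_d1_d2_eq_iff (u : K2) (i : Fin 3) (x : K0) :
    (∃ j, M.d1 j (M.d2 i u) = x) ↔ ∃ k ≠ i, M.vtx u k = x := by
  fin_cases i <;> simp [Fin.exists_fin_succ, vtx, M.simp01, M.simp02, M.simp12] <;> tauto

theorem vtx_injective (u : K2) : Function.Injective (M.vtx u) := by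
  have h0 := M.regular1 (M.d2 0 u)
  have h1 := M.regular1 (M.d2 1 u)
  have h2 := M.regular1 (M.d2 2 u)
  rw [M.simp01, M.simp02, M.simp12] at *
  intro a b hab
  fin_cases a <;> fin_cases b <;> simp_all [vtx, eq_comm]

def wEdges (w : K0) (u : K2) : Set K1 :=
  {e | edgeOf M.d2 e u ∧ ∃ j, M.d1 j e = w}

theorem ncard_setOf_edgeOf (e : K1) : {u | edgeOf M.d2 e u}.ncard = 2 := by
  obtain ⟨u, v, huv, hu, hv, huv_only⟩ := M.edge_two e
  rw [show {x | edgeOf M.d2 e x} = {u, v} from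
    Set.ext fun x => ⟨huv_only x, by rintro (rfl | rfl) <;> assumption⟩]
  exact Set.ncard_pair huv

theorem ncard_wEdges {w : K0} {u : K2} (hw : vertexOf M.d2 M.d1 w u) :
    (M.wEdges w u).ncard = 2 := by
  obtain ⟨i, hi⟩ := hw
  obtain ⟨k, -, rfl⟩ := (M.exists_d1_d2_eq_iff u i w).mp hi
  have : M.wEdges (M.vtx u k) u = (M.d2 · u) '' {k}ᶜ := by
    ext e
    simp only [wEdges, edgeOf, Set.mem_ofPred_eq, Set.mem_image, Set.mem_compl_singleton_iff]
    constructor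
    · rintro ⟨⟨i, rfl⟩, hk⟩
      obtain ⟨k', hk'i, hk'⟩ := (M.exists_d1_d2_eq_iff u i _).mp hk
      exact ⟨i, fun h => hk'i (M.vtx_injective u hk' ▸ h.symm), rfl⟩
    · rintro ⟨i, hik, rfl⟩
      exact ⟨⟨i, rfl⟩, (M.exists_d1_d2_eq_iff u i _).mpr ⟨k, Ne.symm hik, rfl⟩⟩
  rw [this, Set.ncard_image_of_injective _ (M.regular2 u), Set.ncard_compl, Set.ncard_singleton,
    Nat.card_eq_fintype_card, Fintype.card_fin]

@[ext]
structure Flag (w : K0) where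
  cell : K2
  edge : K1
  edge_mem : edge ∈ M.wEdges w cell

theorem Flag.nonempty (w : K0) : Nonempty (M.Flag w) := by
  obtain ⟨e, j, hj⟩ := M.homog0 w
  obtain ⟨u, hu⟩ := M.homog1 e
  exact ⟨⟨u, e, hu, j, hj⟩⟩

variable {M} {w : K0}

namespace Flag

theorem vertexOf_cell (q : M.Flag w) : vertexOf M.d2 M.d1 w q.cell := by
  obtain ⟨⟨i, hi⟩, j, hj⟩ := q.edge_mem
  exact ⟨i, j, hi ▸ hj⟩

noncomputable def turn (q : M.Flag w) : M.Flag w where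
  cell := q.cell
  edge := (M.wEdges w q.cell).partner q.edge
  edge_mem := Set.partner_mem (M.ncard_wEdges q.vertexOf_cell) q.edge_mem

noncomputable def cross (q : M.Flag w) : M.Flag w where
  cell := {u | edgeOf M.d2 q.edge u}.partner q.cell
  edge := q.edge
  edge_mem := ⟨Set.partner_mem (M.ncard_setOf_edgeOf q.edge) q.edge_mem.1, q.edge_mem.2⟩

theorem turn_involutive : Function.Involutive (turn : M.Flag w → M.Flag w) := fun q =>
  Flag.ext rfl (Set.partner_partner (M.ncard_wEdges q.vertexOf_cell) q.edge_mem)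

theorem cross_involutive : Function.Involutive (cross : M.Flag w → M.Flag w) := fun q =>
  Flag.ext (Set.partner_partner (M.ncard_setOf_edgeOf q.edge) q.edge_mem.1) rfl

theorem turn_ne (q : M.Flag w) : q.turn ≠ q := fun h =>
  Set.partner_ne (M.ncard_wEdges q.vertexOf_cell) q.edge_mem (congrArg edge h)

theorem cross_ne (q : M.Flag w) : q.cross ≠ q := fun h =>
  Set.partner_ne (M.ncard_setOf_edgeOf q.edge) q.edge_mem.1 (congrArg cell h)

theorem eq_turn_of_cell_eq {q q' : M.Flag w} (h : q.cell = q'.cell) (hne : q ≠ q') :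
    q' = q.turn :=
  Flag.ext h.symm <| (Set.partner_eq_of_mem_of_ne (M.ncard_wEdges q.vertexOf_cell) q.edge_mem
    (h ▸ q'.edge_mem) fun he => hne (Flag.ext h he.symm)).symm

noncomputable def rotate (q : M.Flag w) : M.Flag w :=
  q.cross.turn

theorem rotate_injective : Function.Injective (rotate : M.Flag w → M.Flag w) :=
  turn_involutive.injective.comp cross_involutive.injective

theorem iterate_rotate_ne_turn (n : ℕ) (q : M.Flag w) : rotate^[n] q ≠ q.turn :=
  turn_involutive.iterate_comp_apply_ne cross_involutive turn_ne cross_ne n q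

theorem cross_turn_rotate (q : M.Flag w) : q.rotate.turn.cross = q := by
  rw [rotate, turn_involutive, cross_involutive]

theorem wNbr_cell_rotate (q : M.Flag w) : wNbr M.d2 M.d1 w q.cell q.rotate.cell :=
  ⟨q.edge, q.edge_mem.1, q.cross.edge_mem.1, q.edge_mem.2⟩

theorem eq_cell_cross_or_eq_cell_cross_turn {q : M.Flag w} {v : K2}
    (hv : wNbr M.d2 M.d1 w q.cell v) (hne : v ≠ q.cell) :
    v = q.cross.cell ∨ v = q.turn.cross.cell := by
  obtain ⟨e, heq, hev, hw⟩ := hv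
  have hcross (p : M.Flag w) (hp : p.cell = q.cell) (he : p.edge = e) : v = p.cross.cell :=
    (Set.partner_eq_of_mem_of_ne (M.ncard_setOf_edgeOf p.edge) p.edge_mem.1 (he ▸ hev)
      (hp ▸ hne)).symm
  by_cases he : q.edge = e
  · exact Or.inl (hcross q rfl he)
  · exact Or.inr <| hcross q.turn rfl <| Set.partner_eq_of_mem_of_ne
      (M.ncard_wEdges q.vertexOf_cell) q.edge_mem ⟨heq, hw⟩ (Ne.symm he)

instance [Finite K2] [Finite K1] : Finite (M.Flag w) :=
  Finite.of_injective (fun q => (q.cell, q.edge)) fun _ _ h =>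
    Flag.ext (congrArg Prod.fst h) (congrArg Prod.snd h)

theorem cell_iterate_rotate_injOn (q : M.Flag w) :
    Set.InjOn (fun i => (rotate^[i] q).cell) (Set.Iio (minimalPeriod rotate q)) := by
  have key {i j : ℕ} (hij : i < j) (hj : j < minimalPeriod rotate q) :
      (rotate^[i] q).cell ≠ (rotate^[j] q).cell := fun h => by
    have hne : rotate^[i] q ≠ rotate^[j] q := fun h' =>
      hij.ne (iterate_injOn_Iio_minimalPeriod (hij.trans hj) hj h')
    have hturn := eq_turn_of_cell_eq h hne
    rw [← Nat.sub_add_cancel hij.le, iterate_add_apply] at hturn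
    exact iterate_rotate_ne_turn _ _ hturn
  intro i hi j hj h
  rcases lt_trichotomy i j with hij | rfl | hji
  · exact absurd h (key hij hj)
  · rfl
  · exact absurd h.symm (key hji hi)

variable [Finite K2] [Finite K1]

theorem minimalPeriod_rotate_pos (q : M.Flag w) : 0 < minimalPeriod rotate q :=
  minimalPeriod_pos_of_mem_periodicPts (rotate_injective.mem_periodicPts q)

theorem exists_iterate_rotate_cell_eq_of_wNbr (q : M.Flag w) (i : ℕ) {v : K2}
    (hv : wNbr M.d2 M.d1 w (rotate^[i] q).cell v) : ∃ j, (rotate^[j] q).cell = v := by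
  by_cases hne : v = (rotate^[i] q).cell
  · exact ⟨i, hne.symm⟩
  obtain h | h := eq_cell_cross_or_eq_cell_cross_turn hv hne
  · exact ⟨i + 1, by rw [iterate_succ_apply', h]; rfl⟩
  · have hn := minimalPeriod_rotate_pos q
    refine ⟨i + minimalPeriod rotate q - 1, ?_⟩
    have hprev : rotate (rotate^[i + minimalPeriod rotate q - 1] q) = rotate^[i] q := by
      rw [← iterate_succ_apply' rotate, Nat.succ_eq_add_one, Nat.sub_add_cancel (by omega),
        iterate_add_minimalPeriod_eq]
    rw [h, ← hprev, cross_turn_rotate]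

theorem exists_lt_minimalPeriod_iterate_rotate_cell_eq (q : M.Flag w) {v : K2}
    (hv : vertexOf M.d2 M.d1 w v) : ∃ i < minimalPeriod rotate q, (rotate^[i] q).cell = v := by
  suffices ∃ i, (rotate^[i] q).cell = v by
    obtain ⟨i, rfl⟩ := this
    exact ⟨i % _, Nat.mod_lt _ (minimalPeriod_rotate_pos q), by rw [iterate_mod_minimalPeriod_eq]⟩
  have hlink := M.linked w q.cell v q.vertexOf_cell hv
  clear hv
  induction hlink with
  | refl => exact ⟨0, rfl⟩
  | tail _ hbc ih =>
    obtain ⟨i, rfl⟩ := ih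
    exact exists_iterate_rotate_cell_eq_of_wNbr q i hbc

end Flag

end MComplex

open MComplex

theorem camembert {K2 K1 K0 : Type*} (M : MComplex K2 K1 K0) (w : K0) :
    ∃ n : ℕ, 0 < n ∧ ∃ u : ℕ → K2,
      (∀ i < n, vertexOf M.d2 M.d1 w (u i)) ∧
      (∀ i j, i < n → j < n → u i = u j → i = j) ∧
      (∀ v : K2, vertexOf M.d2 M.d1 w v → ∃ i < n, u i = v) ∧
      (∀ i, i + 1 < n → wNbr M.d2 M.d1 w (u i) (u (i + 1))) ∧
      wNbr M.d2 M.d1 w (u (n - 1)) (u 0) := by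
  have := M.finite2
  have := M.finite1
  obtain ⟨q⟩ := Flag.nonempty M w
  have hn := Flag.minimalPeriod_rotate_pos q
  refine ⟨minimalPeriod Flag.rotate q, hn, fun i => (Flag.rotate^[i] q).cell,
    fun i _ => (Flag.rotate^[i] q).vertexOf_cell,
    fun i j hi hj h => Flag.cell_iterate_rotate_injOn q hi hj h,
    fun v hv => Flag.exists_lt_minimalPeriod_iterate_rotate_cell_eq q hv,
    fun i _ => ?_, ?_⟩
  · dsimp only
    rw [iterate_succ_apply' Flag.rotate]
    exact (Flag.rotate^[i] q).wNbr_cell_rotate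
  · have hlast := (Flag.rotate^[minimalPeriod Flag.rotate q - 1] q).wNbr_cell_rotate
    rwa [← iterate_succ_apply' Flag.rotate, Nat.succ_eq_add_one, Nat.sub_add_cancel hn,
      iterate_minimalPeriod] at hlast
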